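/- arXiv:1211.6733 — 3 statements merged into one kernel-verified Lean document; each statement's English description precedes it below -/
import Mathlib

section
/- Let F_q be a finite field of q elements with q odd, and define f(x) = ∏_{α,β ∈ F_q} (x − αt − β) ∈ F_q[t][x]. Then for every a ∈ F_q[t], the polynomial f(a(t), t) ∈ F_q[t] is divisible by (t^q − t)^2; in particular f(a) is never square-free. -/
/-!
Put `q = |F|` and `D = t^q - t`. For fixed `α`, the inner product over `β` is
`∏_β (g - β) = g^q - g` with `g = a - αt`; by Frobenius `g^q = g(t^q)`, and `D` divides
`g(t^q) - g(t)`. Hence `D^q ∣ f(a)` with `q ≥ 2`, and `t ∣ D` gives `t^2 ∣ f(a)`.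
-/

open Polynomial

/-- A polynomial in `F[t]` is square-free if it is not divisible by `P^2`
for any nonconstant `P ∈ F[t]`. -/
def IsSquarefreePoly {F : Type*} [Field F] (g : Polynomial F) : Prop :=
  ¬ ∃ P : Polynomial F, 0 < P.natDegree ∧ P ^ 2 ∣ g

namespace FiniteField

variable {F : Type*} [Field F] [Fintype F]

theorem prod_X_sub_C_eq_X_pow_card_sub_X :
    ∏ x : F, (X - C x) = X ^ Fintype.card F - X := by
  have hmonic : (X ^ Fintype.card F - X : F[X]).Monic :=
    (monic_X_pow _).sub_of_left (by
      rw [degree_X, degree_X_pow]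
      exact_mod_cast Fintype.one_lt_card)
  have hroots := roots_X_pow_card_sub_X F
  have hcard : (X ^ Fintype.card F - X : F[X]).roots.card
      = (X ^ Fintype.card F - X : F[X]).natDegree := by
    rw [hroots, X_pow_card_sub_X_natDegree_eq F Fintype.one_lt_card]
    rfl
  have := prod_multiset_X_sub_C_of_monic_of_roots_card_eq hmonic hcard
  rwa [hroots] at this

theorem prod_sub_algebraMap_eq_pow_card_sub {A : Type*} [CommRing A] [Algebra F A] (y : A) :
    ∏ x : F, (y - algebraMap F A x) = y ^ Fintype.card F - y := by
  simpa using congrArg (aeval y) (prod_X_sub_C_eq_X_pow_card_sub_X (F := F))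

theorem X_pow_card_sub_X_dvd_pow_card_sub_self (g : F[X]) :
    (X ^ Fintype.card F - X : F[X]) ∣ g ^ Fintype.card F - g := by
  have h := sub_dvd_eval_sub (X ^ Fintype.card F) X (g.map C)
  rwa [eval_map, eval_map, eval₂_C_X, ← comp.eq_def, ← expand_eq_comp_X_pow, expand_card] at h

theorem X_pow_card_sub_X_pow_card_dvd_prod_sub_linear (a : F[X]) :
    (X ^ Fintype.card F - X : F[X]) ^ Fintype.card F ∣
      ∏ α : F, ∏ β : F, (a - (C α * X + C β)) := by
  have hinner (α : F) :
      ∏ β : F, (a - (C α * X + C β)) = (a - C α * X) ^ Fintype.card F - (a - C α * X) := by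
    rw [← prod_sub_algebraMap_eq_pow_card_sub]
    exact Finset.prod_congr rfl fun β _ => by rw [algebraMap_eq]; ring
  rw [Finset.prod_congr rfl fun α _ => hinner α, ← Finset.card_univ, ← Finset.prod_const]
  exact Finset.prod_dvd_prod_of_dvd _ _ fun α _ => X_pow_card_sub_X_dvd_pow_card_sub_self _

end FiniteField

theorem stmt_3_general {F : Type*} [Field F] [Fintype F]
    (f : Polynomial (Polynomial F))
    (hf : f = ∏ α : F, ∏ β : F,
      (Polynomial.X - Polynomial.C (Polynomial.C α * Polynomial.X + Polynomial.C β)))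
    (a : Polynomial F) :
    (Polynomial.X ^ (Fintype.card F) - Polynomial.X : Polynomial F) ^ 2 ∣ f.eval a ∧
      ¬ IsSquarefreePoly (f.eval a) := by
  have hfa : f.eval a = ∏ α : F, ∏ β : F, (a - (C α * X + C β)) := by
    simp only [hf, eval_prod, eval_sub, eval_X, eval_C]
  have hdvd : (X ^ Fintype.card F - X : F[X]) ^ 2 ∣ f.eval a :=
    hfa ▸ (pow_dvd_pow _ Fintype.one_lt_card).trans
      (FiniteField.X_pow_card_sub_X_pow_card_dvd_prod_sub_linear a)
  have hX : (X : F[X]) ∣ X ^ Fintype.card F - X :=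
    dvd_sub (dvd_pow_self X Fintype.card_ne_zero) dvd_rfl
  exact ⟨hdvd, fun h => h ⟨X, by simp, (pow_dvd_pow_of_dvd hX 2).trans hdvd⟩⟩

/-- For `F_q` a finite field with `q` odd and
`f(x) = ∏_{α,β ∈ F_q} (x − (αt + β)) ∈ F_q[t][x]`, for every `a ∈ F_q[t]` the value
`f(a(t),t)` is divisible by `(t^q − t)^2`; in particular it is never square-free. -/
theorem stmt_3 {F : Type*} [Field F] [Fintype F] (hq : Odd (Fintype.card F))
    (f : Polynomial (Polynomial F))
    (hf : f = ∏ α : F, ∏ β : F,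
      (Polynomial.X - Polynomial.C (Polynomial.C α * Polynomial.X + Polynomial.C β)))
    (a : Polynomial F) :
    (Polynomial.X ^ (Fintype.card F) - Polynomial.X : Polynomial F) ^ 2 ∣ f.eval a ∧
      ¬ IsSquarefreePoly (f.eval a) :=
  stmt_3_general f hf a
end

section
/- Let F be an algebraically closed field, c ∈ F[t] monic with distinct roots α_1,…,α_k, and f_0(x,t) = Σ_j γ_j(t) x^j ∈ F[t][x] primitive. Regard R(a_0,…,a_{n−1}) = ∏_{i=1}^{k} f_0(a(α_i), α_i) as a polynomial in the coefficients a_0,…,a_{n−1} of the monic polynomial a(t) = a_0 + ⋯ + a_{n−1}t^{n−1} + t^n. Then R is not the zero polynomial, and its total degree equals L = Σ_i deg_x f_0(x, α_i) ≤ deg c · deg_x f_0; moreover the coefficient of a_0^L in R is ∏_i γ_{ℓ(α_i)}(α_i) ≠ 0, where ℓ(α_i) = deg_x f_0(x, α_i). -/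
/-!
Since `a(α)` is affine-linear in the coefficients, each factor `f₀(a(α), α)` has total degree
at most `ℓ(α)`, so `deg R ≤ L`. Specialising `a₀ ↦ x` and the other coefficients to `0` turns
`R` into `∏ f₀(x + αⁿ, α)`, a polynomial in `x` of degree exactly `L` whose leading coefficient
`∏ γ_{ℓ(α)}(α)` is therefore the coefficient of `a₀^L` in `R`. It is nonzero because
primitivity of `f₀` keeps every `f₀(x, α)` nonzero.
-/

open Polynomial

/-- The generic monic polynomial `a(t) = a_0 + a_1 t + ⋯ + a_{n−1}t^{n−1} + t^n`,
evaluated at `t = α`, as a polynomial in the indeterminate coefficients `a_0,…,a_{n−1}`. -/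
noncomputable def genEval {F : Type*} [Field F] (n : ℕ) (α : F) :
    MvPolynomial (Fin n) F :=
  MvPolynomial.C (α ^ n) + ∑ i : Fin n, MvPolynomial.C (α ^ (i : ℕ)) * MvPolynomial.X i

namespace MvPolynomial

variable {R σ : Type*} [CommSemiring R]

theorem coeff_aeval_single_X [DecidableEq σ] (z : σ) (S : MvPolynomial σ R) (k : ℕ) :
    (aeval (Pi.single z (Polynomial.X : R[X])) S).coeff k = S.coeff (Finsupp.single z k) := by
  induction S using induction_on' with
  | add p q hp hq => simp only [map_add, Polynomial.coeff_add, coeff_add, hp, hq]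
  | monomial u a =>
    rw [aeval_monomial, coeff_monomial]
    by_cases hu : u = Finsupp.single z (u z)
    · rw [hu, Finsupp.prod_single_index (by simp), Pi.single_eq_same, Polynomial.algebraMap_eq,
        Polynomial.coeff_C_mul_X_pow]
      simp only [(Finsupp.single_injective z).eq_iff, eq_comm]
    · obtain ⟨i, hiz, hi⟩ : ∃ i, i ≠ z ∧ u i ≠ 0 := by
        by_contra! h
        exact hu (Finsupp.ext fun i => by
          by_cases hi : i = z <;> simp [hi, h])
      have hne : u ≠ Finsupp.single z k := fun h => hi (by simp [h, hiz])
      rw [Finsupp.prod, Finset.prod_eq_zero (Finsupp.mem_support_iff.2 hi)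
        (by rw [Pi.single_eq_of_ne hiz, zero_pow hi]), mul_zero, if_neg hne, Polynomial.coeff_zero]

theorem totalDegree_aeval_le (g : MvPolynomial σ R) (p : R[X]) :
    (Polynomial.aeval g p).totalDegree ≤ p.natDegree * g.totalDegree := by
  rw [Polynomial.aeval_eq_sum_range]
  refine (totalDegree_finsetSum _ _).trans (Finset.sup_le fun e he => ?_)
  calc (p.coeff e • g ^ e).totalDegree ≤ (g ^ e).totalDegree := totalDegree_smul_le _ _
    _ ≤ e * g.totalDegree := totalDegree_pow _ _
    _ ≤ p.natDegree * g.totalDegree := by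
      gcongr; exact Nat.lt_succ_iff.1 (Finset.mem_range.1 he)

end MvPolynomial

theorem Polynomial.IsPrimitive.map_evalRingHom_ne_zero {R : Type*} [CommRing R] [Nontrivial R]
    {f : R[X][X]} (hf : f.IsPrimitive) (α : R) : f.map (evalRingHom α) ≠ 0 := by
  intro h
  refine not_isUnit_X_sub_C α (hf _ ((C_dvd_iff_dvd_coeff _ _).2 fun j => dvd_iff_isRoot.2 ?_))
  simpa using congrArg (coeff · j) h

theorem Polynomial.sum_natDegree_map_evalRingHom_roots_le {R : Type*} [CommRing R] [IsDomain R]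
    [DecidableEq R] (c : R[X]) (f : R[X][X]) :
    ∑ α ∈ c.roots.toFinset, (f.map (evalRingHom α)).natDegree ≤ c.natDegree * f.natDegree :=
  calc ∑ α ∈ c.roots.toFinset, (f.map (evalRingHom α)).natDegree
      ≤ ∑ _α ∈ c.roots.toFinset, f.natDegree := Finset.sum_le_sum fun _ _ => natDegree_map_le
    _ = c.roots.toFinset.card * f.natDegree := by rw [Finset.sum_const, smul_eq_mul]
    _ ≤ c.natDegree * f.natDegree :=
      Nat.mul_le_mul_right _ (c.roots.toFinset_card_le.trans (card_roots' c))

section genEval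

variable {F : Type*} [Field F] {n : ℕ}

theorem totalDegree_genEval_le (α : F) : (genEval n α).totalDegree ≤ 1 := by
  refine (MvPolynomial.totalDegree_add _ _).trans (max_le ?_ ?_)
  · exact (MvPolynomial.totalDegree_C _).trans_le zero_le_one
  · refine MvPolynomial.totalDegree_finsetSum_le fun i _ => ?_
    rw [MvPolynomial.C_mul_X_eq_monomial]
    exact (MvPolynomial.totalDegree_monomial_le _ _).trans_eq (by simp)

theorem aeval_single_X_genEval (hn : 0 < n) (α : F) :
    MvPolynomial.aeval (Pi.single ⟨0, hn⟩ (X : F[X])) (genEval n α) = X + C (α ^ n) := by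
  rw [genEval, map_add, map_sum, Finset.sum_eq_single ⟨0, hn⟩, add_comm]
  · simp
  · intro i _ hi
    simp [Pi.single_eq_of_ne hi]
  · simp

theorem aeval_single_X_aeval_genEval (hn : 0 < n) (α : F) (p : F[X]) :
    MvPolynomial.aeval (Pi.single ⟨0, hn⟩ (X : F[X])) (aeval (genEval n α) p) =
      taylor (α ^ n) p := by
  rw [← aeval_algHom_apply, aeval_single_X_genEval, taylor_apply, comp_eq_aeval]

theorem totalDegree_prod_aeval_genEval_le (s : Finset F) (p : F → F[X]) :
    (∏ α ∈ s, aeval (genEval n α) (p α)).totalDegree ≤ ∑ α ∈ s, (p α).natDegree := by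
  refine (MvPolynomial.totalDegree_finsetProd _ _).trans (Finset.sum_le_sum fun α _ => ?_)
  calc (aeval (genEval n α) (p α)).totalDegree
      ≤ (p α).natDegree * (genEval n α).totalDegree := MvPolynomial.totalDegree_aeval_le _ _
    _ ≤ (p α).natDegree := mul_le_of_le_one_right (Nat.zero_le _) (totalDegree_genEval_le α)

theorem coeff_prod_aeval_genEval (hn : 0 < n) (s : Finset F) (p : F → F[X])
    (hp : ∀ α ∈ s, p α ≠ 0) :
    (∏ α ∈ s, aeval (genEval n α) (p α)).coeff
        (Finsupp.single ⟨0, hn⟩ (∑ α ∈ s, (p α).natDegree)) =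
      ∏ α ∈ s, (p α).leadingCoeff := by
  have hdeg : (∏ α ∈ s, taylor (α ^ n) (p α)).natDegree = ∑ α ∈ s, (p α).natDegree := by
    rw [natDegree_prod _ _ fun α hα => mt (taylor_eq_zero _ _).1 (hp α hα)]
    simp only [natDegree_taylor]
  rw [← MvPolynomial.coeff_aeval_single_X, map_prod]
  simp only [aeval_single_X_aeval_genEval, ← hdeg, coeff_natDegree, leadingCoeff_prod,
    leadingCoeff_taylor]

end genEval

theorem stmt_12_general {F : Type*} [Field F] [DecidableEq F]
    (c : Polynomial F)
    (f₀ : Polynomial (Polynomial F))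
    (hprim : ∀ d : Polynomial F, (∀ j, d ∣ f₀.coeff j) → IsUnit d)
    (n : ℕ) (hn : 0 < n)
    (R : MvPolynomial (Fin n) F)
    (hR : R = ∏ α ∈ c.roots.toFinset,
      Polynomial.aeval (genEval n α) (f₀.map (Polynomial.evalRingHom α)))
    (L : ℕ)
    (hL : L = ∑ α ∈ c.roots.toFinset, (f₀.map (Polynomial.evalRingHom α)).natDegree) :
    R ≠ 0 ∧ R.totalDegree = L ∧ L ≤ c.natDegree * f₀.natDegree ∧
      MvPolynomial.coeff (Finsupp.single (⟨0, hn⟩ : Fin n) L) R =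
        ∏ α ∈ c.roots.toFinset, (f₀.map (Polynomial.evalRingHom α)).leadingCoeff ∧
      (∏ α ∈ c.roots.toFinset, (f₀.map (Polynomial.evalRingHom α)).leadingCoeff) ≠ 0 := by
  have hf₀ : ∀ α, f₀.map (evalRingHom α) ≠ 0 := IsPrimitive.map_evalRingHom_ne_zero
    fun d hd => hprim d ((C_dvd_iff_dvd_coeff _ _).1 hd)
  have hcoeff : R.coeff (Finsupp.single ⟨0, hn⟩ L) =
      ∏ α ∈ c.roots.toFinset, (f₀.map (evalRingHom α)).leadingCoeff := by
    rw [hR, hL]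
    exact coeff_prod_aeval_genEval hn _ _ fun α _ => hf₀ α
  have hlc : ∏ α ∈ c.roots.toFinset, (f₀.map (evalRingHom α)).leadingCoeff ≠ 0 :=
    Finset.prod_ne_zero_iff.2 fun α _ => leadingCoeff_ne_zero.2 (hf₀ α)
  have hsupp : Finsupp.single ⟨0, hn⟩ L ∈ R.support :=
    MvPolynomial.mem_support_iff.2 (hcoeff ▸ hlc)
  refine ⟨fun h => by simp [h] at hsupp, le_antisymm ?_ ?_,
    hL ▸ sum_natDegree_map_evalRingHom_roots_le c f₀, hcoeff, hlc⟩
  · rw [hR, hL]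
    exact totalDegree_prod_aeval_genEval_le _ _
  · simpa using MvPolynomial.le_totalDegree hsupp

/-- Let `F` be algebraically closed, `c ∈ F[t]` monic with distinct roots, and
`f₀ ∈ F[t][x]` primitive. Then `R = ∏_{c(α)=0} f₀(a(α),α)`, as a polynomial in the
coefficients `a_0,…,a_{n−1}`, is nonzero of total degree `L = Σ deg_x f₀(x,α) ≤
deg c · deg_x f₀`, and the coefficient of `a_0^L` is `∏ γ_{ℓ(α)}(α) ≠ 0`. -/
theorem stmt_12 {F : Type*} [Field F] [IsAlgClosed F] [DecidableEq F]
    (c : Polynomial F) (hc : c.Monic) (hnodup : c.roots.Nodup)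
    (f₀ : Polynomial (Polynomial F))
    (hprim : ∀ d : Polynomial F, (∀ j, d ∣ f₀.coeff j) → IsUnit d)
    (n : ℕ) (hn : 0 < n)
    (R : MvPolynomial (Fin n) F)
    (hR : R = ∏ α ∈ c.roots.toFinset,
      Polynomial.aeval (genEval n α) (f₀.map (Polynomial.evalRingHom α)))
    (L : ℕ)
    (hL : L = ∑ α ∈ c.roots.toFinset, (f₀.map (Polynomial.evalRingHom α)).natDegree) :
    R ≠ 0 ∧ R.totalDegree = L ∧ L ≤ c.natDegree * f₀.natDegree ∧
      MvPolynomial.coeff (Finsupp.single (⟨0, hn⟩ : Fin n) L) R =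
        ∏ α ∈ c.roots.toFinset, (f₀.map (Polynomial.evalRingHom α)).leadingCoeff ∧
      (∏ α ∈ c.roots.toFinset, (f₀.map (Polynomial.evalRingHom α)).leadingCoeff) ≠ 0 :=
  stmt_12_general c f₀ hprim n hn R hR L hL
end

section
/- Let F be a field, and let f ∈ F[t][x] be separable over F(t), primitive, with x-degree d ≥ 1 and height h. Consider the map sending (a_0,…,a_{n−1}) ∈ F^n to disc_t(f(a(t),t)) where a(t) = a_0 + ⋯ + a_{n−1}t^{n−1} + t^n. This map is given by a polynomial in a_0,…,a_{n−1} of total degree at most 2(nd + h)d. -/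
open Polynomial

/-- The height of `f = Σ γ_j(t) x^j ∈ F[t][x]` is `max_j deg γ_j`. -/
noncomputable def polyHeight {F : Type*} [Field F] (f : Polynomial (Polynomial F)) : ℕ :=
  f.support.sup fun j => (f.coeff j).natDegree

/-- The Sylvester matrix of `p` and `q`, regarded as polynomials of degrees `m` and `n`. -/
noncomputable def sylvesterMatrix {R : Type*} [CommRing R] (m n : ℕ)
    (p q : Polynomial R) : Matrix (Fin (m + n)) (Fin (m + n)) R :=
  Matrix.of fun i j =>
    if (i : ℕ) < n then (if (i : ℕ) ≤ (j : ℕ) then p.coeff ((j : ℕ) - (i : ℕ)) else 0)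
    else (if (i : ℕ) - n ≤ (j : ℕ) then q.coeff ((j : ℕ) - ((i : ℕ) - n)) else 0)

/-- The resultant of `p` and `q` regarded as polynomials of degrees `m`, `n`. -/
noncomputable def resultantDeg {R : Type*} [CommRing R] (m n : ℕ)
    (p q : Polynomial R) : R :=
  (sylvesterMatrix m n p q).det

/-- The discriminant in `t` of `g ∈ F[t]`, regarded as a polynomial of degree `M`. -/
noncomputable def discT {F : Type*} [Field F] (M : ℕ) (g : Polynomial F) : F :=
  resultantDeg M (M - 1) g (Polynomial.derivative g)

/-- The monic polynomial `a(t) = a_0 + ⋯ + a_{n−1}t^{n−1} + t^n`. -/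
noncomputable def monicFromCoeffs {F : Type*} [Field F] {n : ℕ} (a : Fin n → F) :
    Polynomial F :=
  Polynomial.X ^ n + ∑ i : Fin n, Polynomial.C (a i) * Polynomial.X ^ (i : ℕ)

/-!
The discriminant is the resultant of `g` and `g'`, i.e. the determinant of a Sylvester
matrix of size `M + (M - 1)` with `M = nd + h`. Substituting the generic monic polynomial
`a(t)` with indeterminate coefficients into `f` gives a polynomial in `t` whose coefficients
have total degree at most `d` in the `a_i`, and differentiating in `t` keeps this bound.
Hence every entry of the generic Sylvester matrix has degree `≤ d`, its determinant has
degree `≤ (2M - 1)d`, and specialising the `a_i` commutes with taking the determinant.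
-/

section CoeffTotalDegree

variable {R σ : Type*} [CommSemiring R]

def CoeffTotalDegreeLE (c : ℕ) (p : (MvPolynomial σ R)[X]) : Prop :=
  ∀ k, (p.coeff k).totalDegree ≤ c

namespace CoeffTotalDegreeLE

variable {c c₁ c₂ : ℕ} {p q : (MvPolynomial σ R)[X]}

theorem mono (hp : CoeffTotalDegreeLE c₁ p) (h : c₁ ≤ c₂) : CoeffTotalDegreeLE c₂ p :=
  fun k => (hp k).trans h

theorem one : CoeffTotalDegreeLE 0 (1 : (MvPolynomial σ R)[X]) := by
  intro k
  rw [coeff_one]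
  split_ifs <;> simp

theorem add (hp : CoeffTotalDegreeLE c p) (hq : CoeffTotalDegreeLE c q) :
    CoeffTotalDegreeLE c (p + q) := fun k => by
  rw [coeff_add]
  exact (MvPolynomial.totalDegree_add _ _).trans (max_le (hp k) (hq k))

theorem finsetSum {ι : Type*} (s : Finset ι) {f : ι → (MvPolynomial σ R)[X]}
    (hf : ∀ i ∈ s, CoeffTotalDegreeLE c (f i)) : CoeffTotalDegreeLE c (∑ i ∈ s, f i) :=
  fun k => by
    rw [finsetSum_coeff]
    exact (MvPolynomial.totalDegree_finsetSum _ _).trans (Finset.sup_le fun i hi => hf i hi k)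

theorem mul (hp : CoeffTotalDegreeLE c₁ p) (hq : CoeffTotalDegreeLE c₂ q) :
    CoeffTotalDegreeLE (c₁ + c₂) (p * q) := fun k => by
  rw [coeff_mul]
  refine (MvPolynomial.totalDegree_finsetSum _ _).trans (Finset.sup_le fun x _ => ?_)
  exact (MvPolynomial.totalDegree_mul _ _).trans (add_le_add (hp _) (hq _))

theorem pow (hp : CoeffTotalDegreeLE c p) (j : ℕ) : CoeffTotalDegreeLE (j * c) (p ^ j) := by
  induction j with
  | zero => simpa using one
  | succ j ih => simpa [pow_succ, add_mul] using ih.mul hp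

theorem map_C (γ : R[X]) :
    CoeffTotalDegreeLE 0 (γ.map (MvPolynomial.C : R →+* MvPolynomial σ R)) := fun k => by
  simp [coeff_map]

theorem X_pow (n : ℕ) : CoeffTotalDegreeLE 0 (X ^ n : (MvPolynomial σ R)[X]) := fun k => by
  rw [coeff_X_pow]
  split_ifs <;> simp

theorem C_X_mul_X_pow (i : σ) (j : ℕ) :
    CoeffTotalDegreeLE 1 (C (MvPolynomial.X i) * X ^ j : (MvPolynomial σ R)[X]) := fun k => by
  rw [coeff_C_mul_X_pow]
  split_ifs
  · rw [MvPolynomial.X]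
    exact (MvPolynomial.totalDegree_monomial_le _ _).trans (by simp)
  · simp

theorem derivative (hp : CoeffTotalDegreeLE c p) : CoeffTotalDegreeLE c (derivative p) :=
  fun k => by
    rw [coeff_derivative, ← Nat.cast_succ, ← map_natCast MvPolynomial.C]
    exact (MvPolynomial.totalDegree_mul _ _).trans
      (by rw [MvPolynomial.totalDegree_C, add_zero]; exact hp (k + 1))

theorem eval₂_mapRingHom_C (f : R[X][X]) (hp : CoeffTotalDegreeLE 1 p) :
    CoeffTotalDegreeLE f.natDegree (f.eval₂ (mapRingHom MvPolynomial.C) p) := by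
  rw [eval₂_eq_sum, Polynomial.sum]
  refine finsetSum _ fun e he => ?_
  refine ((map_C (f.coeff e)).mul (hp.pow e)).mono ?_
  simpa using le_natDegree_of_mem_supp e he

end CoeffTotalDegreeLE

end CoeffTotalDegree

theorem MvPolynomial.totalDegree_det_le {R σ ι : Type*} [CommRing R] [Fintype ι]
    [DecidableEq ι] (M : Matrix ι ι (MvPolynomial σ R)) {c : ℕ}
    (hM : ∀ i j, (M i j).totalDegree ≤ c) : M.det.totalDegree ≤ Fintype.card ι * c := by
  rw [Matrix.det_apply]
  refine (totalDegree_finsetSum _ _).trans (Finset.sup_le fun τ _ => ?_)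
  have hprod : (∏ i, M (τ i) i).totalDegree ≤ Fintype.card ι * c :=
    calc (∏ i, M (τ i) i).totalDegree ≤ ∑ i, (M (τ i) i).totalDegree :=
          totalDegree_finsetProd _ _
      _ ≤ ∑ _i : ι, c := Finset.sum_le_sum fun i _ => hM _ _
      _ = Fintype.card ι * c := by simp
  rcases Int.units_eq_one_or (Equiv.Perm.sign τ) with hτ | hτ
  · simpa [hτ] using hprod
  · simpa [hτ, Units.smul_def] using hprod

section Resultant

variable {R : Type*} [CommRing R]

theorem totalDegree_resultantDeg_le {σ : Type*} {m n c : ℕ} {p q : (MvPolynomial σ R)[X]}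
    (hp : CoeffTotalDegreeLE c p) (hq : CoeffTotalDegreeLE c q) :
    (resultantDeg m n p q).totalDegree ≤ (m + n) * c := by
  rw [resultantDeg]
  simpa using MvPolynomial.totalDegree_det_le (sylvesterMatrix m n p q) fun i j => by
    simp only [sylvesterMatrix, Matrix.of_apply]
    split_ifs <;> simp [hp _, hq _]

theorem map_resultantDeg {S : Type*} [CommRing S] (φ : R →+* S) (m n : ℕ) (p q : R[X]) :
    φ (resultantDeg m n p q) = resultantDeg m n (p.map φ) (q.map φ) := by
  rw [resultantDeg, resultantDeg, RingHom.map_det]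
  congr 1
  ext i j
  simp only [RingHom.mapMatrix_apply, sylvesterMatrix, Matrix.map_apply, Matrix.of_apply]
  split_ifs <;> simp [coeff_map]

end Resultant

theorem discT_map_eq_eval {F σ : Type*} [Field F] (M : ℕ) (g : (MvPolynomial σ F)[X])
    (a : σ → F) :
    discT M (g.map (MvPolynomial.eval a))
      = MvPolynomial.eval a (resultantDeg M (M - 1) g (derivative g)) := by
  rw [discT, map_resultantDeg, derivative_map]

section GenericMonic

variable {F : Type*} [Field F]

noncomputable def genericMonic (n : ℕ) (R : Type*) [CommSemiring R] :
    (MvPolynomial (Fin n) R)[X] :=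
  X ^ n + ∑ i : Fin n, C (MvPolynomial.X i) * X ^ (i : ℕ)

theorem coeffTotalDegreeLE_genericMonic (n : ℕ) (R : Type*) [CommSemiring R] :
    CoeffTotalDegreeLE 1 (genericMonic n R) :=
  ((CoeffTotalDegreeLE.X_pow n).mono zero_le_one).add <|
    CoeffTotalDegreeLE.finsetSum _ fun i _ => CoeffTotalDegreeLE.C_X_mul_X_pow i i

theorem map_eval_genericMonic {n : ℕ} (a : Fin n → F) :
    (genericMonic n F).map (MvPolynomial.eval a) = monicFromCoeffs a := by
  simp [genericMonic, monicFromCoeffs, Polynomial.map_sum]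

theorem map_eval_eval₂_genericMonic (f : F[X][X]) {n : ℕ} (a : Fin n → F) :
    (f.eval₂ (mapRingHom MvPolynomial.C) (genericMonic n F)).map (MvPolynomial.eval a)
      = f.eval (monicFromCoeffs a) := by
  have hC : (MvPolynomial.eval a).comp (MvPolynomial.C : F →+* MvPolynomial (Fin n) F)
      = RingHom.id F := by
    ext; simp
  rw [← coe_mapRingHom, hom_eval₂, mapRingHom_comp, hC, mapRingHom_id, coe_mapRingHom,
    map_eval_genericMonic]
  rfl

end GenericMonic

theorem stmt_15_general {F : Type*} [Field F] (f : Polynomial (Polynomial F))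
    (d h n : ℕ) (hd : f.natDegree = d) :
    ∃ P : MvPolynomial (Fin n) F,
      P.totalDegree ≤ 2 * (n * d + h) * d ∧
      ∀ a : Fin n → F,
        MvPolynomial.eval a P = discT (n * d + h) (f.eval (monicFromCoeffs a)) := by
  set M := n * d + h
  set G := f.eval₂ (mapRingHom MvPolynomial.C) (genericMonic n F)
  have hG : CoeffTotalDegreeLE d G :=
    hd ▸ CoeffTotalDegreeLE.eval₂_mapRingHom_C f (coeffTotalDegreeLE_genericMonic n F)
  refine ⟨resultantDeg M (M - 1) G (derivative G), ?_, fun a => ?_⟩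
  · calc _ ≤ (M + (M - 1)) * d := totalDegree_resultantDeg_le hG hG.derivative
      _ ≤ 2 * M * d := by gcongr; omega
  · rw [← map_eval_eval₂_genericMonic f a, discT_map_eq_eval]

/-- For `f ∈ F[t][x]` separable over `F(t)`, primitive, of `x`-degree `d ≥ 1` and
height `h`, the map `(a_0,…,a_{n−1}) ↦ disc_t f(a(t),t)` is given by a polynomial in
`a_0,…,a_{n−1}` of total degree at most `2(nd + h)d`. -/
theorem stmt_15 {F : Type*} [Field F] (f : Polynomial (Polynomial F))
    (hsep : (f.map (algebraMap (Polynomial F) (RatFunc F))).Separable)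
    (hprim : ∀ e : Polynomial F, (∀ j, e ∣ f.coeff j) → IsUnit e)
    (d h n : ℕ) (hd : f.natDegree = d) (hd1 : 1 ≤ d) (hh : polyHeight f = h) :
    ∃ P : MvPolynomial (Fin n) F,
      P.totalDegree ≤ 2 * (n * d + h) * d ∧
      ∀ a : Fin n → F,
        MvPolynomial.eval a P = discT (n * d + h) (f.eval (monicFromCoeffs a)) :=
  stmt_15_general f d h n hd
end
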